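/- arXiv:0906.1888 — 6 statements merged into one kernel-verified Lean document; each statement's English description precedes it below -/
import Mathlib

section
/- Let θ₁, θ₂ ∈ ℝ and let w = w₁ + w₂·j be a quaternion with w₁, w₂ ∈ ℂ and |w| = 1. Then the quaternion e^{iθ₁} w e^{−iθ₂} w̄ + w e^{iθ₂} w̄ e^{−iθ₁} is real and equals 2(|w₁|² cos(θ₁ − θ₂) + |w₂|² cos(θ₁ + θ₂)). -/
open Quaternion

/-- The quaternion `e^{iθ} = cos θ + (sin θ)·i`. -/
noncomputable def expI (θ : ℝ) : ℍ[ℝ] := ⟨Real.cos θ, Real.sin θ, 0, 0⟩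

/-- A complex number `x + y·i` regarded as a quaternion. -/
def cq (z : ℂ) : ℍ[ℝ] := ⟨z.re, z.im, 0, 0⟩

/-- The quaternion unit `j`. -/
def jq : ℍ[ℝ] := ⟨0, 0, 1, 0⟩

/-! The second summand is the conjugate of the first, so the sum is twice the real part of
`e^{iθ₁} w e^{-iθ₂} w̄`. Writing `w = w₁ + w₂ j` and using `j z = z̄ j` for complex `z`, that real
part is `Re (e^{i(θ₁-θ₂)} |w₁|² + e^{i(θ₁+θ₂)} |w₂|²)`. -/

theorem star_expI (θ : ℝ) : star (expI θ) = expI (-θ) := by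
  ext <;> simp only [re_star, imI_star, imJ_star, imK_star] <;> simp [expI]

theorem star_expI_mul_mul_expI_mul_star (θ₁ θ₂ : ℝ) (w : ℍ[ℝ]) :
    star (expI θ₁ * w * expI (-θ₂) * star w) = w * expI θ₂ * star w * expI (-θ₁) := by
  simp only [star_mul, star_star, star_expI, neg_neg, mul_assoc]

theorem re_expI_mul_mul_expI_mul_star (θ₁ θ₂ : ℝ) (w₁ w₂ : ℂ) :
    (expI θ₁ * (cq w₁ + cq w₂ * jq) * expI (-θ₂) * star (cq w₁ + cq w₂ * jq)).re
      = ‖w₁‖ ^ 2 * Real.cos (θ₁ - θ₂) + ‖w₂‖ ^ 2 * Real.cos (θ₁ + θ₂) := by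
  simp only [re_mul, imI_mul, imJ_mul, imK_mul, re_add, imI_add, imJ_add, imK_add,
    re_star, imI_star, imJ_star, imK_star]
  simp only [expI, cq, jq, Real.cos_neg, Real.sin_neg, Complex.sq_norm, Complex.normSq_apply,
    Real.cos_sub, Real.cos_add]
  ring

theorem stmt0_general (θ₁ θ₂ : ℝ) (w₁ w₂ : ℂ) (w : ℍ[ℝ])
    (hw : w = cq w₁ + cq w₂ * jq) :
    expI θ₁ * w * expI (-θ₂) * star w + w * expI θ₂ * star w * expI (-θ₁)
      = ((2 * (‖w₁‖ ^ 2 * Real.cos (θ₁ - θ₂)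
          + ‖w₂‖ ^ 2 * Real.cos (θ₁ + θ₂)) : ℝ) : ℍ[ℝ]) := by
  rw [← star_expI_mul_mul_expI_mul_star, self_add_star', hw, re_expI_mul_mul_expI_mul_star]

theorem stmt0 (θ₁ θ₂ : ℝ) (w₁ w₂ : ℂ) (w : ℍ[ℝ])
    (hw : w = cq w₁ + cq w₂ * jq) (hnorm : ‖w‖ = 1) :
    expI θ₁ * w * expI (-θ₂) * star w + w * expI θ₂ * star w * expI (-θ₁)
      = ((2 * (‖w₁‖ ^ 2 * Real.cos (θ₁ - θ₂)
          + ‖w₂‖ ^ 2 * Real.cos (θ₁ + θ₂)) : ℝ) : ℍ[ℝ]) :=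
  stmt0_general θ₁ θ₂ w₁ w₂ w hw
end

section
/- Let θ₁, θ₂ ∈ ℝ. As w ranges over the quaternions with |w| = 1, the minimum of the real quantity T(w) = e^{iθ₁} w e^{−iθ₂} w̄ + w e^{iθ₂} w̄ e^{−iθ₁} equals min{2cos(θ₁ − θ₂), 2cos(θ₁ + θ₂)}; in particular the minimum is 2cos(θ₁ + θ₂) if cos(θ₁ − θ₂) ≥ cos(θ₁ + θ₂), and 2cos(θ₁ − θ₂) otherwise. -/
open Quaternion

/-- The set of values of the (real) quantity
`T(w) = e^{iθ₁} w e^{−iθ₂} w̄ + w e^{iθ₂} w̄ e^{−iθ₁}` as `w` ranges over unit quaternions. -/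
noncomputable def Tset (θ₁ θ₂ : ℝ) : Set ℝ :=
  {r : ℝ | ∃ w : ℍ[ℝ], ‖w‖ = 1 ∧
    r = (expI θ₁ * w * expI (-θ₂) * star w + w * expI θ₂ * star w * expI (-θ₁)).re}

/-! For `w = a + bi + cj + dk` the quantity `T(w)` only sees `w` through `|w|²` and
`a² + b² − c² − d² ∈ [−|w|², |w|²]`, the latter entering linearly with coefficient
`2 sin θ₁ sin θ₂`. So `T` ranges between `2 cos(θ₁ − θ₂)` (at `w = 1`) and `2 cos(θ₁ + θ₂)`
(at `w = j`). -/

theorem re_expI_mul_mul_expI_mul_star_add (θ₁ θ₂ : ℝ) (w : ℍ[ℝ]) :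
    (expI θ₁ * w * expI (-θ₂) * star w + w * expI θ₂ * star w * expI (-θ₁)).re
      = 2 * (Real.cos θ₁ * Real.cos θ₂ * normSq w
        + Real.sin θ₁ * Real.sin θ₂ * (w.re ^ 2 + w.imI ^ 2 - w.imJ ^ 2 - w.imK ^ 2)) := by
  simp only [re_add, re_mul, re_star, imI_star, imJ_star, imK_star, imI_mul, imJ_mul, imK_mul]
  simp only [normSq_def', expI, Real.cos_neg, Real.sin_neg]
  ring

theorem abs_sq_add_sq_sub_sq_sub_sq_le_normSq (w : ℍ[ℝ]) :
    |w.re ^ 2 + w.imI ^ 2 - w.imJ ^ 2 - w.imK ^ 2| ≤ normSq w := by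
  rw [normSq_def', abs_le]
  constructor <;> nlinarith [sq_nonneg w.re, sq_nonneg w.imI, sq_nonneg w.imJ, sq_nonneg w.imK]

theorem min_add_sub_le_add_mul {a b s : ℝ} (hs : |s| ≤ 1) : min (a + b) (a - b) ≤ a + b * s := by
  rw [abs_le] at hs
  rcases le_total 0 b with hb | hb
  · exact (min_le_right _ _).trans (by nlinarith)
  · exact (min_le_left _ _).trans (by nlinarith)

theorem two_cos_sub_mem_Tset (θ₁ θ₂ : ℝ) : 2 * Real.cos (θ₁ - θ₂) ∈ Tset θ₁ θ₂ := by
  refine ⟨1, norm_one, ?_⟩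
  rw [re_expI_mul_mul_expI_mul_star_add, Real.cos_sub]
  simp

theorem two_cos_add_mem_Tset (θ₁ θ₂ : ℝ) : 2 * Real.cos (θ₁ + θ₂) ∈ Tset θ₁ θ₂ := by
  -- A literal `⟨0, 0, 1, 0⟩` has type `QuaternionAlgebra ℝ (-1) 0 (-1)`, which `simp` and `rw`
  -- do not match against `ℍ[ℝ]`, so `j` is introduced through its coordinates.
  obtain ⟨j, hre, hi, hj, hk⟩ : ∃ j : ℍ[ℝ], j.re = 0 ∧ j.imI = 0 ∧ j.imJ = 1 ∧ j.imK = 0 :=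
    ⟨⟨0, 0, 1, 0⟩, rfl, rfl, rfl, rfl⟩
  have hunit : normSq j = 1 := by simp [normSq_def', hre, hi, hj, hk]
  refine ⟨j, by rw [norm_eq_sqrt_real_inner, inner_self, hunit, Real.sqrt_one], ?_⟩
  rw [re_expI_mul_mul_expI_mul_star_add, hunit, hre, hi, hj, hk, Real.cos_add]
  ring

theorem min_two_cos_mem_lowerBounds_Tset (θ₁ θ₂ : ℝ) :
    min (2 * Real.cos (θ₁ - θ₂)) (2 * Real.cos (θ₁ + θ₂)) ∈ lowerBounds (Tset θ₁ θ₂) := by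
  rintro r ⟨w, hw, rfl⟩
  have hunit : normSq w = 1 := by rw [normSq_eq_norm_mul_self, hw, one_mul]
  have hs := abs_sq_add_sq_sub_sq_sub_sq_le_normSq w
  rw [hunit] at hs
  have hmin := min_add_sub_le_add_mul (a := Real.cos θ₁ * Real.cos θ₂)
    (b := Real.sin θ₁ * Real.sin θ₂) hs
  rw [re_expI_mul_mul_expI_mul_star_add, hunit, Real.cos_sub, Real.cos_add,
    ← mul_min_of_nonneg _ _ zero_le_two]
  linarith

theorem isLeast_Tset (θ₁ θ₂ : ℝ) :
    IsLeast (Tset θ₁ θ₂) (min (2 * Real.cos (θ₁ - θ₂)) (2 * Real.cos (θ₁ + θ₂))) := by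
  refine ⟨?_, min_two_cos_mem_lowerBounds_Tset θ₁ θ₂⟩
  rcases min_choice (2 * Real.cos (θ₁ - θ₂)) (2 * Real.cos (θ₁ + θ₂)) with h | h <;> rw [h]
  exacts [two_cos_sub_mem_Tset θ₁ θ₂, two_cos_add_mem_Tset θ₁ θ₂]

theorem stmt2 (θ₁ θ₂ : ℝ) :
    IsLeast (Tset θ₁ θ₂) (min (2 * Real.cos (θ₁ - θ₂)) (2 * Real.cos (θ₁ + θ₂)))
    ∧ (Real.cos (θ₁ + θ₂) ≤ Real.cos (θ₁ - θ₂) →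
        IsLeast (Tset θ₁ θ₂) (2 * Real.cos (θ₁ + θ₂)))
    ∧ (Real.cos (θ₁ - θ₂) < Real.cos (θ₁ + θ₂) →
        IsLeast (Tset θ₁ θ₂) (2 * Real.cos (θ₁ - θ₂))) := by
  have h := isLeast_Tset θ₁ θ₂
  refine ⟨h, fun hle => ?_, fun hlt => ?_⟩
  · rwa [min_eq_right (by linarith)] at h
  · rwa [min_eq_left (by linarith)] at h
end

section
/- Let θ₁, θ₂ ∈ [0, π]. Then sup{ |u e^{iθ₁} u⁻¹ − w e^{iθ₂} w⁻¹|² : u, w ∈ ℍ \ {0} } = max{ 4 sin²((θ₁ − θ₂)/2), 4 sin²((θ₁ + θ₂)/2) }, and this supremum is attained. -/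
open Quaternion

/-!
Conjugation preserves the norm and the real part of a quaternion, so `a = u e^{iθ₁} u⁻¹` and
`b = w e^{iθ₂} w⁻¹` are unit quaternions with real parts `cos θₖ`, hence with imaginary parts of
norm `sin θₖ ≥ 0`. Then `‖a - b‖² = 2 - 2⟪a, b⟫`, and Cauchy–Schwarz on the imaginary parts gives
`⟪a, b⟫ ≥ cos θ₁ cos θ₂ - sin θ₁ sin θ₂ = cos (θ₁ + θ₂)`, i.e. `‖a - b‖² ≤ 4 sin² ((θ₁ + θ₂) / 2)`,
which is the larger of the two values since `sin θ₁ sin θ₂ ≥ 0`. The bound is attained at `u = 1`,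
`w = j`, because conjugation by `j` sends `e^{iθ₂}` to `e^{-iθ₂}`.
-/

open Real RealInnerProductSpace

theorem norm_mul_mul_inv {α : Type*} [NormedDivisionRing α] {u : α} (hu : u ≠ 0) (x : α) :
    ‖u * x * u⁻¹‖ = ‖x‖ := by
  rw [norm_mul, norm_mul, norm_inv, mul_comm ‖u‖, mul_assoc,
    mul_inv_cancel₀ (norm_ne_zero_iff.mpr hu), mul_one]

namespace Quaternion

theorem re_mul_comm {R : Type*} [CommRing R] (a b : ℍ[R]) : (a * b).re = (b * a).re := by
  simp only [re_mul]; ring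

theorem re_mul_mul_inv {R : Type*} [Field R] [LinearOrder R] [IsStrictOrderedRing R] {u : ℍ[R]}
    (hu : u ≠ 0) (x : ℍ[R]) : (u * x * u⁻¹).re = x.re := by
  rw [re_mul_comm, ← mul_assoc, inv_mul_cancel₀ hu, one_mul]

theorem inner_eq_re_mul_re_add_inner_im (a b : ℍ[ℝ]) :
    ⟪a, b⟫ = a.re * b.re + ⟪a.im, b.im⟫ := by
  simp only [inner_def, re_mul, re_star, imI_star, imJ_star, imK_star, re_im, imI_im, imJ_im,
    imK_im]
  ring

theorem norm_sq_eq_re_sq_add_norm_im_sq (a : ℍ[ℝ]) : ‖a‖ ^ 2 = a.re ^ 2 + ‖a.im‖ ^ 2 := by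
  rw [← real_inner_self_eq_norm_sq, ← real_inner_self_eq_norm_sq, inner_eq_re_mul_re_add_inner_im,
    sq]

theorem re_mul_re_sub_norm_im_mul_le_inner (a b : ℍ[ℝ]) :
    a.re * b.re - ‖a.im‖ * ‖b.im‖ ≤ ⟪a, b⟫ := by
  rw [inner_eq_re_mul_re_add_inner_im]
  linarith [neg_le_of_abs_le (abs_real_inner_le_norm a.im b.im)]

end Quaternion

@[simp] theorem re_expI (θ : ℝ) : (expI θ).re = cos θ := rfl
@[simp] theorem imI_expI (θ : ℝ) : (expI θ).imI = sin θ := rfl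
@[simp] theorem imJ_expI (θ : ℝ) : (expI θ).imJ = 0 := rfl
@[simp] theorem imK_expI (θ : ℝ) : (expI θ).imK = 0 := rfl

theorem inner_expI (α β : ℝ) : ⟪expI α, expI β⟫ = cos (α - β) := by
  simp [inner_def, re_mul, cos_sub]

theorem norm_expI (θ : ℝ) : ‖expI θ‖ = 1 := by
  rw [← pow_eq_one_iff_of_nonneg (norm_nonneg _) two_ne_zero, ← real_inner_self_eq_norm_sq,
    inner_expI, sub_self, cos_zero]

def quaternionJ : ℍ[ℝ] := ⟨0, 0, 1, 0⟩

@[simp] theorem re_quaternionJ : quaternionJ.re = 0 := rfl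
@[simp] theorem imI_quaternionJ : quaternionJ.imI = 0 := rfl
@[simp] theorem imJ_quaternionJ : quaternionJ.imJ = 1 := rfl
@[simp] theorem imK_quaternionJ : quaternionJ.imK = 0 := rfl

theorem quaternionJ_ne_zero : quaternionJ ≠ 0 := fun h => by
  simpa using congrArg (·.imJ) h

theorem quaternionJ_mul_expI_mul_inv (θ : ℝ) :
    quaternionJ * expI θ * quaternionJ⁻¹ = expI (-θ) := by
  have hinv : quaternionJ⁻¹ = -quaternionJ := by
    apply inv_eq_of_mul_eq_one_right
    ext <;> simp [re_mul, imI_mul, imJ_mul, imK_mul]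
  rw [hinv]
  ext <;> simp [re_mul, imI_mul, imJ_mul, imK_mul]

section Conjugates

variable {θ θ₁ θ₂ : ℝ} {u w : ℍ[ℝ]}

theorem norm_mul_expI_mul_inv (hu : u ≠ 0) : ‖u * expI θ * u⁻¹‖ = 1 := by
  rw [norm_mul_mul_inv hu, norm_expI]

theorem norm_im_mul_expI_mul_inv (hθ : θ ∈ Set.Icc 0 π) (hu : u ≠ 0) :
    ‖(u * expI θ * u⁻¹).im‖ = sin θ := by
  have h := norm_sq_eq_re_sq_add_norm_im_sq (u * expI θ * u⁻¹)
  rw [norm_mul_expI_mul_inv hu, re_mul_mul_inv hu, re_expI] at h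
  rw [← sq_eq_sq₀ (norm_nonneg _) (sin_nonneg_of_nonneg_of_le_pi hθ.1 hθ.2)]
  linarith [sin_sq_add_cos_sq θ]

theorem norm_sub_mul_expI_mul_inv_sq_le (h₁ : θ₁ ∈ Set.Icc 0 π) (h₂ : θ₂ ∈ Set.Icc 0 π)
    (hu : u ≠ 0) (hw : w ≠ 0) :
    ‖u * expI θ₁ * u⁻¹ - w * expI θ₂ * w⁻¹‖ ^ 2 ≤ 2 - 2 * cos (θ₁ + θ₂) := by
  have h := re_mul_re_sub_norm_im_mul_le_inner (u * expI θ₁ * u⁻¹) (w * expI θ₂ * w⁻¹)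
  rw [re_mul_mul_inv hu, re_mul_mul_inv hw, re_expI, re_expI, norm_im_mul_expI_mul_inv h₁ hu,
    norm_im_mul_expI_mul_inv h₂ hw, ← cos_add] at h
  rw [norm_sub_sq_real, norm_mul_expI_mul_inv hu, norm_mul_expI_mul_inv hw]
  linarith

end Conjugates

theorem norm_expI_sub_expI_neg_sq (θ₁ θ₂ : ℝ) :
    ‖expI θ₁ - expI (-θ₂)‖ ^ 2 = 2 - 2 * cos (θ₁ + θ₂) := by
  rw [norm_sub_sq_real, norm_expI, norm_expI, inner_expI, sub_neg_eq_add]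
  ring

theorem four_mul_sin_half_sq (x : ℝ) : 4 * sin (x / 2) ^ 2 = 2 - 2 * cos x := by
  rw [sin_sq_eq_half_sub, mul_div_cancel₀ x two_ne_zero]
  ring

theorem cos_add_le_cos_sub {x y : ℝ} (hx : 0 ≤ sin x) (hy : 0 ≤ sin y) :
    cos (x + y) ≤ cos (x - y) := by
  rw [cos_add, cos_sub]
  linarith [mul_nonneg hx hy]

theorem stmt4 (θ₁ θ₂ : ℝ) (h₁ : θ₁ ∈ Set.Icc 0 Real.pi) (h₂ : θ₂ ∈ Set.Icc 0 Real.pi) :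
    IsGreatest {r : ℝ | ∃ u w : ℍ[ℝ], u ≠ 0 ∧ w ≠ 0 ∧
        r = ‖u * expI θ₁ * u⁻¹ - w * expI θ₂ * w⁻¹‖ ^ 2}
      (max (4 * Real.sin ((θ₁ - θ₂) / 2) ^ 2) (4 * Real.sin ((θ₁ + θ₂) / 2) ^ 2)) := by
  have hmax : max (4 * sin ((θ₁ - θ₂) / 2) ^ 2) (4 * sin ((θ₁ + θ₂) / 2) ^ 2)
      = 2 - 2 * cos (θ₁ + θ₂) := by
    rw [four_mul_sin_half_sq, four_mul_sin_half_sq, max_eq_right]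
    linarith [cos_add_le_cos_sub (sin_nonneg_of_nonneg_of_le_pi h₁.1 h₁.2)
      (sin_nonneg_of_nonneg_of_le_pi h₂.1 h₂.2)]
  rw [hmax]
  refine ⟨⟨1, quaternionJ, one_ne_zero, quaternionJ_ne_zero, ?_⟩, ?_⟩
  · rw [one_mul, inv_one, mul_one, quaternionJ_mul_expI_mul_inv, norm_expI_sub_expI_neg_sq]
  · rintro r ⟨u, w, hu, hw, rfl⟩
    exact norm_sub_mul_expI_mul_inv_sq_le h₁ h₂ hu hw
end

section
/- Let h ∈ Sp(n,1) with block form h = [[A, α],[β, a]], let g = diag(λ₁, …, λₙ, λ_{n+1}) with each |λᵢ| = 1, and set δ = max_{1≤i≤n} sup{ |u λᵢ u⁻¹ − w λ_{n+1} w⁻¹|² : u, w ∈ ℍ \ {0} }. If a′ denotes the (n+1, n+1) entry of h g h⁻¹, then |a′|² − 1 ≤ (|a|² − 1)·|a|²·δ. -/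
/-!
Since `h⁻¹ = J h* J`, the corner entry of `h g h⁻¹` is `a λ ā - ∑ βᵢ λᵢ β̄ᵢ`, where `β` is the
last row of `h` off the diagonal. As `x λ x̄ = |x|² (x λ x⁻¹)`, this is `|a|² ℓ - ∑ |βᵢ|² μᵢ` with
unit quaternions `ℓ = a λ a⁻¹` and `μᵢ = βᵢ λᵢ βᵢ⁻¹`, and the corner of `h h⁻¹ = 1` gives
`|a|² = 1 + t` with `t = ∑ |βᵢ|²`. So `a' = ℓ + s` with `s = ∑ |βᵢ|² (ℓ - μᵢ)`; for unit vectors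
`2⟨ℓ, ℓ - μ⟩ = |ℓ - μ|²`, and Cauchy–Schwarz gives `|s|² ≤ t ∑ |βᵢ|² |ℓ - μᵢ|²`, whence
`|a'|² - 1 ≤ (1 + t) t δ`.
-/

open Quaternion Matrix

/-- The Hermitian form `J = diag(1,…,1,−1)` on `ℍ^{n,1}`, as an `(n+1)×(n+1)`
quaternionic matrix indexed by `Fin n ⊕ Unit`. -/
noncomputable def Jm (n : ℕ) : Matrix (Fin n ⊕ Unit) (Fin n ⊕ Unit) ℍ[ℝ] :=
  Matrix.fromBlocks 1 0 0 (-1)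

/-- `Sp(n,1)`: the quaternionic matrices `g` with `g* J g = J`. -/
noncomputable def Sp (n : ℕ) : Set (Matrix (Fin n ⊕ Unit) (Fin n ⊕ Unit) ℍ[ℝ]) :=
  {g | gᴴ * Jm n * g = Jm n}

section InnerProductSpace

variable {E : Type*} [NormedAddCommGroup E] [InnerProductSpace ℝ E]

theorem two_mul_inner_sub_eq_norm_sub_sq {x y : E} (hx : ‖x‖ = 1) (hy : ‖y‖ = 1) :
    2 * inner ℝ x (x - y) = ‖x - y‖ ^ 2 := by
  rw [norm_sub_sq_real, inner_sub_right, real_inner_self_eq_norm_sq, hx, hy]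
  ring

theorem norm_sq_smul_sub_sum_smul_le {ι : Type*} [Fintype ι] {c : ι → ℝ} (hc : ∀ i, 0 ≤ c i)
    {ℓ : E} (hℓ : ‖ℓ‖ = 1) {μ : ι → E} {δ : ℝ} (hμ : ∀ i, c i ≠ 0 → ‖μ i‖ = 1)
    (hδ : ∀ i, c i ≠ 0 → ‖μ i - ℓ‖ ^ 2 ≤ δ) :
    ‖(1 + ∑ i, c i) • ℓ - ∑ i, c i • μ i‖ ^ 2 - 1 ≤ (∑ i, c i) * (1 + ∑ i, c i) * δ := by
  set t := ∑ i, c i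
  set s := ∑ i, c i • (ℓ - μ i)
  set q := ∑ i, c i * ‖ℓ - μ i‖ ^ 2
  have ht : 0 ≤ t := Finset.sum_nonneg fun i _ => hc i
  have hsplit : (1 + t) • ℓ - ∑ i, c i • μ i = ℓ + s := by
    simp only [s, t, smul_sub, Finset.sum_sub_distrib, add_smul, one_smul, Finset.sum_smul]
    abel
  have hinner : 2 * inner ℝ ℓ s = q := by
    simp only [s, q, inner_sum, Finset.mul_sum, real_inner_smul_right]
    refine Finset.sum_congr rfl fun i _ => ?_
    rcases eq_or_ne (c i) 0 with hci | hci
    · simp [hci]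
    · rw [← two_mul_inner_sub_eq_norm_sub_sq hℓ (hμ i hci)]
      ring
  have hs : ‖s‖ ^ 2 ≤ t * q := by
    calc ‖s‖ ^ 2 ≤ (∑ i, c i * ‖ℓ - μ i‖) ^ 2 := by
          gcongr
          refine (norm_sum_le _ _).trans_eq (Finset.sum_congr rfl fun i _ => ?_)
          rw [norm_smul, Real.norm_of_nonneg (hc i)]
      _ ≤ t * q := Finset.sum_sq_le_sum_mul_sum_of_sq_le_mul _ (fun i _ => hc i)
          (fun i _ => mul_nonneg (hc i) (sq_nonneg _)) fun i _ => le_of_eq (by ring)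
  have hq : q ≤ t * δ := by
    rw [Finset.sum_mul]
    refine Finset.sum_le_sum fun i _ => ?_
    rcases eq_or_ne (c i) 0 with hci | hci
    · simp [hci]
    · rw [norm_sub_rev]
      exact mul_le_mul_of_nonneg_left (hδ i hci) (hc i)
  rw [hsplit, norm_add_sq_real, hℓ, hinner]
  nlinarith

end InnerProductSpace

theorem norm_sub_sq_le_four {E : Type*} [SeminormedAddCommGroup E] {x y : E} (hx : ‖x‖ = 1)
    (hy : ‖y‖ = 1) : ‖x - y‖ ^ 2 ≤ 4 := by
  have := norm_sub_le x y
  rw [hx, hy] at this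
  nlinarith [norm_nonneg (x - y)]

theorem norm_mul_mul_inv_s9 {K : Type*} [NormedDivisionRing K] {x : K} (hx : x ≠ 0) (l : K) :
    ‖x * l * x⁻¹‖ = ‖l‖ := by
  rw [norm_mul, norm_mul, norm_inv, mul_right_comm, mul_inv_cancel₀ (norm_ne_zero_iff.mpr hx),
    one_mul]

theorem Quaternion.mul_mul_star_eq_smul (x l : ℍ[ℝ]) :
    x * l * star x = ‖x‖ ^ 2 • (x * l * x⁻¹) := by
  rcases eq_or_ne x 0 with rfl | hx
  · simp
  · calc x * l * star x = x * l * x⁻¹ * (x * star x) := by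
          rw [mul_assoc (x * l), inv_mul_cancel_left₀ hx]
      _ = ‖x‖ ^ 2 • (x * l * x⁻¹) := by
          rw [self_mul_star, mul_coe_eq_smul, normSq_eq_norm_mul_self, sq]

theorem corner_mul_diagonal_mul_Jm_conjTranspose_Jm {n : ℕ}
    (h : Matrix (Fin n ⊕ Unit) (Fin n ⊕ Unit) ℍ[ℝ]) (lam : Fin n ⊕ Unit → ℍ[ℝ]) :
    (h * diagonal lam * (Jm n * hᴴ * Jm n)) (.inr ()) (.inr ()) =
      h (.inr ()) (.inr ()) * lam (.inr ()) * star (h (.inr ()) (.inr ()))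
        - ∑ i, h (.inr ()) (.inl i) * lam (.inl i) * star (h (.inr ()) (.inl i)) := by
  simp [Matrix.mul_apply, Fintype.sum_sum_type, Jm, diagonal, mul_assoc, one_apply,
    sub_eq_neg_add]

theorem Jm_mul_Jm (n : ℕ) : Jm n * Jm n = 1 := by
  simp [Jm, fromBlocks_multiply, fromBlocks_one]

namespace Sp

variable {n : ℕ} {h h' : Matrix (Fin n ⊕ Unit) (Fin n ⊕ Unit) ℍ[ℝ]}

theorem eq_Jm_mul_conjTranspose_mul_Jm (hSp : h ∈ Sp n) (hh' : h * h' = 1) :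
    h' = Jm n * hᴴ * Jm n := by
  have hleft : Jm n * hᴴ * Jm n * h = 1 := by
    rw [Matrix.mul_assoc, Matrix.mul_assoc, ← Matrix.mul_assoc hᴴ,
      show hᴴ * Jm n * h = Jm n from hSp, Jm_mul_Jm]
  rw [← Matrix.one_mul h', ← hleft, Matrix.mul_assoc, hh', Matrix.mul_one]

theorem norm_sq_corner (hSp : h ∈ Sp n) (hh' : h * h' = 1) :
    ‖h (.inr ()) (.inr ())‖ ^ 2 = 1 + ∑ i, ‖h (.inr ()) (.inl i)‖ ^ 2 := by
  have hcorner := corner_mul_diagonal_mul_Jm_conjTranspose_Jm h fun _ => 1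
  rw [diagonal_one, Matrix.mul_one, ← eq_Jm_mul_conjTranspose_mul_Jm hSp hh', hh', one_apply_eq]
    at hcorner
  simp only [mul_one, self_mul_star, normSq_eq_norm_mul_self, ← sq] at hcorner
  simp only [← algebraMap_def, ← map_sum, ← map_sub, ← map_one (algebraMap ℝ ℍ[ℝ])] at hcorner
  linarith [algebraMap_injective hcorner]

end Sp

theorem stmt9 (n : ℕ) (h : Matrix (Fin n ⊕ Unit) (Fin n ⊕ Unit) ℍ[ℝ]) (hSp : h ∈ Sp n)
    (lam : Fin n ⊕ Unit → ℍ[ℝ]) (hlam : ∀ i, ‖lam i‖ = 1)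
    (h' : Matrix (Fin n ⊕ Unit) (Fin n ⊕ Unit) ℍ[ℝ]) (hinv : h * h' = 1 ∧ h' * h = 1)
    (δ : ℝ)
    (hδ : δ = sSup {r : ℝ | ∃ i : Fin n, ∃ u w : ℍ[ℝ], u ≠ 0 ∧ w ≠ 0 ∧
        r = ‖u * lam (Sum.inl i) * u⁻¹ - w * lam (Sum.inr ()) * w⁻¹‖ ^ 2}) :
    ‖(h * Matrix.diagonal lam * h') (Sum.inr ()) (Sum.inr ())‖ ^ 2 - 1
      ≤ (‖h (Sum.inr ()) (Sum.inr ())‖ ^ 2 - 1) * ‖h (Sum.inr ()) (Sum.inr ())‖ ^ 2 * δ := by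
  have hnorm := Sp.norm_sq_corner hSp hinv.1
  obtain rfl := Sp.eq_Jm_mul_conjTranspose_mul_Jm hSp hinv.1
  set a := h (.inr ()) (.inr ())
  set β : Fin n → ℍ[ℝ] := fun i => h (.inr ()) (.inl i)
  have ha : a ≠ 0 := by
    rintro ha
    rw [ha, norm_zero] at hnorm
    linarith [Finset.sum_nonneg fun i (_ : i ∈ Finset.univ) => sq_nonneg ‖β i‖]
  have hconj : ∀ {x : ℍ[ℝ]}, x ≠ 0 → ∀ i, ‖x * lam i * x⁻¹‖ = 1 := fun hx i =>
    (norm_mul_mul_inv_s9 hx _).trans (hlam i)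
  have hβ : ∀ i, ‖β i‖ ^ 2 ≠ 0 → β i ≠ 0 := fun i hi h0 => hi (by simp [h0])
  have hδ_le : ∀ i, β i ≠ 0 →
      ‖β i * lam (.inl i) * (β i)⁻¹ - a * lam (.inr ()) * a⁻¹‖ ^ 2 ≤ δ := by
    intro i hi
    rw [hδ]
    refine le_csSup ⟨4, ?_⟩ ⟨i, β i, a, hi, ha, rfl⟩
    rintro r ⟨j, u, w, hu, hw, rfl⟩
    exact norm_sub_sq_le_four (hconj hu _) (hconj hw _)
  rw [corner_mul_diagonal_mul_Jm_conjTranspose_Jm]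
  simp only [mul_mul_star_eq_smul]
  rw [hnorm, add_sub_cancel_left]
  exact norm_sq_smul_sub_sum_smul_le (fun _ => sq_nonneg _) (hconj ha _)
    (fun i hi => hconj (hβ i hi) _) fun i hi => hδ_le i (hβ i hi)
end

section
/- (Complex corollary, normalized form.) Let μ₁, μ₂, μ₃ ∈ ℂ with |μ₁| = |μ₂| = |μ₃| = 1, μ₁ ≠ μ₃ and μ₂ ≠ μ₃, let g = diag(μ₁, μ₂, μ₃) ∈ U(2,1), and let h ∈ U(2,1). Set δ = max{ |μ₁ − μ₃|², |μ₂ − μ₃|² }. If |h₃₃|²·δ < 1, then either (i) h₁₃ = h₂₃ = 0, h₃₁ = h₃₂ = 0 and |h₃₃| = 1, i.e. h fixes the origin of the unit ball of ℂ² under the action of U(2,1), or (ii) there exist pairwise distinct elements γ_m of the subgroup generated by g and h and an element γ_∞ ∈ U(2,1) with γ_m → γ_∞ entrywise; in particular the subgroup generated by g and h is not discrete. -/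
open Matrix Filter

/-- The Hermitian form `J = diag(1, 1, −1)` on `ℂ^{2,1}`. -/
noncomputable def J3 : Matrix (Fin 3) (Fin 3) ℂ := Matrix.diagonal ![1, 1, -1]

/-- `U(2,1)`: the complex `3×3` matrices `h` with `h* J h = J`. -/
noncomputable def U21 : Set (Matrix (Fin 3) (Fin 3) ℂ) :=
  {h | hᴴ * J3 * h = J3}

/-- The subgroup of `U(2,1)` generated by `g` and `h`, realized as the monoid generated
by `g`, `h` and their inverses. -/
noncomputable def genGrpC (g h : Matrix (Fin 3) (Fin 3) ℂ) :
    Submonoid (Matrix (Fin 3) (Fin 3) ℂ) :=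
  Submonoid.closure {g, h, g⁻¹, h⁻¹}

/-!
Put `t(k) = |k₃₁|² + |k₃₂|²` (`bottomNormSq`): `k ∈ U(2,1)` fixes the origin iff `t(k) = 0`,
and `|k₃₃|² = 1 + t(k)` bounds every entry of `k`. Iterate `h₀ = h`, `hₙ₊₁ = hₙ g hₙ⁻¹`.
The bottom row of `hₙ₊₁` is computed from that of `hₙ`, and gives
`t(hₙ₊₁) ≤ δ (1 + t(hₙ)) t(hₙ)`, while `t(hₙ₊₁) > 0` whenever `t(hₙ) > 0` since `μ₁, μ₂ ≠ μ₃`.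
So if `h` moves the origin and `δ |h₃₃|² < 1`, `t(hₙ)` is positive and strictly decreasing:
the `hₙ` are pairwise distinct elements of `⟨g, h⟩` with bounded entries, a subsequence
converges in the closed set `U(2,1)`, and the quotients of consecutive terms tend to `1`.
-/

open Topology ComplexConjugate

lemma normSq_add_mul_conj_le (w₀ w₁ a₀ a₁ : ℂ) :
    Complex.normSq (w₀ * conj a₀ + w₁ * conj a₁)
      ≤ (Complex.normSq w₀ + Complex.normSq w₁) * (Complex.normSq a₀ + Complex.normSq a₁) := by
  have lagrange : (Complex.normSq w₀ + Complex.normSq w₁) * (Complex.normSq a₀ + Complex.normSq a₁)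
      = Complex.normSq (w₀ * conj a₀ + w₁ * conj a₁) + Complex.normSq (w₀ * a₁ - w₁ * a₀) := by
    simp only [Complex.normSq_apply, Complex.add_re, Complex.add_im, Complex.mul_re,
      Complex.mul_im, Complex.conj_re, Complex.conj_im, Complex.sub_re, Complex.sub_im]
    ring
  linarith [Complex.normSq_nonneg (w₀ * a₁ - w₁ * a₀)]

lemma strictAnti_of_le_mul_one_add {t : ℕ → ℝ} {δ : ℝ} (hpos : ∀ n, 0 < t n)
    (hδ : δ * (1 + t 0) < 1) (hstep : ∀ n, t (n + 1) ≤ δ * (1 + t n) * t n) :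
    StrictAnti t := by
  have contract : ∀ n, t n ≤ t 0 → t (n + 1) < t n := fun n hn => by
    have : δ * (1 + t n) < 1 := by
      rcases le_or_gt 0 δ with hδ0 | hδ0 <;> nlinarith [hpos n]
    nlinarith [hstep n, hpos n]
  have bounded : ∀ n, t n ≤ t 0 := fun n => by
    induction n with
    | zero => exact le_rfl
    | succ n ih => exact (contract n ih).le.trans ih
  exact strictAnti_nat_of_succ_lt fun n => contract n (bounded n)

lemma not_discreteTopology_of_tendsto {X : Type*} [TopologicalSpace X] {S : Set X}
    {x : ℕ → X} {a : X} (ha : a ∈ S) (hxS : ∀ n, x n ∈ S) (hxa : ∀ n, x n ≠ a)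
    (hx : Tendsto x atTop (𝓝 a)) : ¬ DiscreteTopology S := by
  rw [discreteTopology_subtype_iff]
  intro hS
  have : Tendsto x atTop (𝓝[≠] a ⊓ 𝓟 S) :=
    tendsto_inf.2 ⟨tendsto_nhdsWithin_iff.2 ⟨hx, .of_forall hxa⟩,
      tendsto_principal.2 (.of_forall hxS)⟩
  rw [hS a ha] at this
  exact this.neBot.ne rfl

section MatrixSequences

variable {n 𝕜 : Type*} [Fintype n] [DecidableEq n] [NormedField 𝕜]

lemma tendsto_succ_mul_inv {A : ℕ → Matrix n n 𝕜} {L : Matrix n n 𝕜} (hL : IsUnit L.det)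
    (hA : Tendsto A atTop (𝓝 L)) : Tendsto (fun j => A (j + 1) * (A j)⁻¹) atTop (𝓝 1) := by
  have hinv : ContinuousAt Inv.inv L := continuousAt_matrix_inv L <| by
    simpa only [Ring.inverse_eq_inv'] using continuousAt_inv₀ hL.ne_zero
  rw [← mul_nonsing_inv L hL]
  exact (hA.comp (tendsto_add_atTop_nat 1)).mul (hinv.tendsto.comp hA)

lemma not_discreteTopology_of_injective_tendsto {S : Submonoid (Matrix n n 𝕜)}
    (hS : ∀ x ∈ S, x⁻¹ ∈ S) {A : ℕ → Matrix n n 𝕜} (hAS : ∀ j, A j ∈ S)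
    (hdet : ∀ j, IsUnit (A j).det) (hA : Function.Injective A) {L : Matrix n n 𝕜}
    (hL : IsUnit L.det) (hAL : Tendsto A atTop (𝓝 L)) : ¬ DiscreteTopology S := by
  refine not_discreteTopology_of_tendsto (S := (S : Set (Matrix n n 𝕜))) S.one_mem
    (fun j => S.mul_mem (hAS (j + 1)) (hS _ (hAS j))) (fun j hj => ?_) (tendsto_succ_mul_inv hL hAL)
  have : A (j + 1) = A j := by
    rw [← Matrix.mul_one (A (j + 1)), ← nonsing_inv_mul (A j) (hdet j), ← Matrix.mul_assoc, hj,
      Matrix.one_mul]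
  exact absurd (hA this) (Nat.succ_ne_self j)

end MatrixSequences

lemma J3_mul_J3 : J3 * J3 = 1 := by
  rw [J3, diagonal_mul_diagonal, ← diagonal_one]
  congr 1
  ext i
  fin_cases i <;> simp

lemma conjTranspose_J3 : J3ᴴ = J3 := by
  rw [J3, diagonal_conjTranspose]
  congr 1
  ext i
  fin_cases i <;> simp

noncomputable def bottomNormSq (k : Matrix (Fin 3) (Fin 3) ℂ) : ℝ :=
  Complex.normSq (k 2 0) + Complex.normSq (k 2 1)

lemma bottomNormSq_nonneg (k : Matrix (Fin 3) (Fin 3) ℂ) : 0 ≤ bottomNormSq k :=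
  add_nonneg (Complex.normSq_nonneg _) (Complex.normSq_nonneg _)

section U21

variable {k l : Matrix (Fin 3) (Fin 3) ℂ}

lemma J3_mul_conjTranspose_mul_J3_mul_of_mem_U21 (hk : k ∈ U21) : (J3 * kᴴ * J3) * k = 1 := by
  rw [Matrix.mul_assoc _ J3, Matrix.mul_assoc, ← Matrix.mul_assoc kᴴ, show kᴴ * J3 * k = J3 from hk,
    J3_mul_J3]

lemma inv_eq_of_mem_U21 (hk : k ∈ U21) : k⁻¹ = J3 * kᴴ * J3 :=
  inv_eq_left_inv (J3_mul_conjTranspose_mul_J3_mul_of_mem_U21 hk)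

lemma isUnit_det_of_mem_U21 (hk : k ∈ U21) : IsUnit k.det :=
  isUnit_det_of_left_inverse (J3_mul_conjTranspose_mul_J3_mul_of_mem_U21 hk)

lemma mul_J3_mul_conjTranspose_of_mem_U21 (hk : k ∈ U21) : k * J3 * kᴴ = J3 :=
  calc k * J3 * kᴴ = k * (J3 * kᴴ * J3) * J3 := by
        simp only [Matrix.mul_assoc, J3_mul_J3, Matrix.mul_one]
    _ = J3 := by
        rw [mul_eq_one_comm.mp (J3_mul_conjTranspose_mul_J3_mul_of_mem_U21 hk), Matrix.one_mul]

lemma mul_mem_U21 (hk : k ∈ U21) (hl : l ∈ U21) : k * l ∈ U21 :=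
  calc (k * l)ᴴ * J3 * (k * l) = lᴴ * (kᴴ * J3 * k) * l := by
        simp only [conjTranspose_mul, Matrix.mul_assoc]
    _ = J3 := by rw [show kᴴ * J3 * k = J3 from hk]; exact hl

lemma inv_mem_U21 (hk : k ∈ U21) : k⁻¹ ∈ U21 := by
  have J3_mul_J3_mul (A : Matrix (Fin 3) (Fin 3) ℂ) : J3 * (J3 * A) = A := by
    rw [← Matrix.mul_assoc, J3_mul_J3, Matrix.one_mul]
  calc k⁻¹ᴴ * J3 * k⁻¹ = J3 * (k * J3 * kᴴ) * J3 := by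
        simp only [inv_eq_of_mem_U21 hk, conjTranspose_mul, conjTranspose_J3,
          conjTranspose_conjTranspose, Matrix.mul_assoc, J3_mul_J3_mul]
    _ = J3 := by rw [mul_J3_mul_conjTranspose_of_mem_U21 hk, J3_mul_J3, Matrix.one_mul]

lemma isClosed_U21 : IsClosed U21 :=
  isClosed_eq (by fun_prop) continuous_const

lemma col_inner_of_mem_U21 (hk : k ∈ U21) (i j : Fin 3) :
    conj (k 0 i) * k 0 j + conj (k 1 i) * k 1 j - conj (k 2 i) * k 2 j = J3 i j := by
  rw [← congrFun₂ (show kᴴ * J3 * k = J3 from hk) i j]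
  simp [mul_apply, Fin.sum_univ_three, J3]
  ring

lemma row_inner_of_mem_U21 (hk : k ∈ U21) (i j : Fin 3) :
    k i 0 * conj (k j 0) + k i 1 * conj (k j 1) - k i 2 * conj (k j 2) = J3 i j := by
  rw [← congrFun₂ (mul_J3_mul_conjTranspose_of_mem_U21 hk) i j]
  simp [mul_apply, Fin.sum_univ_three, J3]
  ring

lemma normSq_col_of_mem_U21 (hk : k ∈ U21) {j : Fin 3} (hj : j ≠ 2) :
    Complex.normSq (k 0 j) + Complex.normSq (k 1 j) = 1 + Complex.normSq (k 2 j) := by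
  have hJ : J3 j j = 1 := by fin_cases j <;> simp_all [J3]
  have := col_inner_of_mem_U21 hk j j
  rw [hJ, ← Complex.normSq_eq_conj_mul_self, ← Complex.normSq_eq_conj_mul_self,
    ← Complex.normSq_eq_conj_mul_self] at this
  linarith [show _ = (1 : ℝ) from mod_cast this]

lemma normSq_col_two_of_mem_U21 (hk : k ∈ U21) :
    Complex.normSq (k 0 2) + Complex.normSq (k 1 2) + 1 = Complex.normSq (k 2 2) := by
  have := col_inner_of_mem_U21 hk 2 2
  rw [show J3 2 2 = -1 by simp [J3], ← Complex.normSq_eq_conj_mul_self,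
    ← Complex.normSq_eq_conj_mul_self, ← Complex.normSq_eq_conj_mul_self] at this
  linarith [show _ = (-1 : ℝ) from mod_cast this]

lemma normSq_two_two_of_mem_U21 (hk : k ∈ U21) :
    Complex.normSq (k 2 2) = bottomNormSq k + 1 := by
  have := row_inner_of_mem_U21 hk 2 2
  rw [show J3 2 2 = -1 by simp [J3], Complex.mul_conj, Complex.mul_conj, Complex.mul_conj] at this
  rw [bottomNormSq]
  linarith [show _ = (-1 : ℝ) from mod_cast this]

lemma normSq_apply_le_normSq_two_two_of_mem_U21 (hk : k ∈ U21) (i j : Fin 3) :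
    Complex.normSq (k i j) ≤ Complex.normSq (k 2 2) := by
  have col₀ := normSq_col_of_mem_U21 hk (j := 0) (by decide)
  have col₁ := normSq_col_of_mem_U21 hk (j := 1) (by decide)
  have col₂ := normSq_col_two_of_mem_U21 hk
  have row₂ := normSq_two_two_of_mem_U21 hk
  rw [bottomNormSq] at row₂
  have := fun i j => Complex.normSq_nonneg (k i j)
  fin_cases i <;> fin_cases j <;> simp only [Fin.zero_eta, Fin.mk_one, Fin.reduceFinMk] <;>
    linarith [this 0 0, this 0 1, this 0 2, this 1 0, this 1 1, this 1 2, this 2 0, this 2 1]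

lemma norm_apply_le_of_bottomNormSq_le (hk : k ∈ U21) (hl : l ∈ U21)
    (hkl : bottomNormSq k ≤ bottomNormSq l) (i j : Fin 3) : ‖k i j‖ ≤ ‖l 2 2‖ := by
  rw [Complex.norm_def, Complex.norm_def]
  refine Real.sqrt_le_sqrt ((normSq_apply_le_normSq_two_two_of_mem_U21 hk i j).trans ?_)
  rw [normSq_two_two_of_mem_U21 hk, normSq_two_two_of_mem_U21 hl]
  exact add_le_add_left hkl 1

lemma apply_two_eq_zero_of_bottomNormSq_eq_zero (hk : k ∈ U21) (ht : bottomNormSq k = 0) :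
    k 0 2 = 0 ∧ k 1 2 = 0 ∧ k 2 0 = 0 ∧ k 2 1 = 0 ∧ ‖k 2 2‖ = 1 := by
  have col₂ := normSq_col_two_of_mem_U21 hk
  rw [normSq_two_two_of_mem_U21 hk, ht] at col₂
  rw [bottomNormSq] at ht
  have := fun i j => Complex.normSq_nonneg (k i j)
  simp only [← Complex.normSq_eq_zero]
  refine ⟨by linarith [this 0 2, this 1 2], by linarith [this 0 2, this 1 2],
    by linarith [this 2 0, this 2 1], by linarith [this 2 0, this 2 1], ?_⟩
  rw [Complex.norm_def, normSq_two_two_of_mem_U21 hk, bottomNormSq, ht, zero_add, Real.sqrt_one]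

lemma exists_mem_U21_tendsto_subseq {γ : ℕ → Matrix (Fin 3) (Fin 3) ℂ} (hγ : ∀ n, γ n ∈ U21)
    {R : ℝ} (hR : ∀ n i j, ‖γ n i j‖ ≤ R) :
    ∃ L ∈ U21, ∃ φ : ℕ → ℕ, StrictMono φ ∧ Tendsto (γ ∘ φ) atTop (𝓝 L) := by
  let : FirstCountableTopology (Matrix (Fin 3) (Fin 3) ℂ) :=
    inferInstanceAs (FirstCountableTopology (Fin 3 → Fin 3 → ℂ))
  have hK : IsCompact (U21 ∩ Set.univ.pi fun _ => Set.univ.pi fun _ => Metric.closedBall 0 R) :=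
    (isCompact_univ_pi fun _ => isCompact_univ_pi fun _ => isCompact_closedBall 0 R).inter_left
      isClosed_U21
  obtain ⟨L, hL, φ, hφ, hlim⟩ := hK.tendsto_subseq fun n =>
    ⟨hγ n, fun i _ j _ => mem_closedBall_zero_iff.2 (hR n i j)⟩
  exact ⟨L, hL.1, φ, hφ, hlim⟩

end U21

section Conjugation

variable {k : Matrix (Fin 3) (Fin 3) ℂ} (μ : Fin 3 → ℂ)

lemma mul_diagonal_mul_inv_apply_two_of_mem_U21 (hk : k ∈ U21) {j : Fin 3} (hj : j ≠ 2) :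
    (k * diagonal μ * k⁻¹) 2 j
      = (μ 0 - μ 2) * k 2 0 * conj (k j 0) + (μ 1 - μ 2) * k 2 1 * conj (k j 1) := by
  have orth := row_inner_of_mem_U21 hk 2 j
  rw [show J3 2 j = 0 by fin_cases j <;> simp_all [J3]] at orth
  rw [inv_eq_of_mem_U21 hk]
  fin_cases j <;> simp_all [mul_apply, Fin.sum_univ_three, J3] <;> linear_combination μ 2 * orth

lemma bottomNormSq_mul_diagonal_mul_inv (hk : k ∈ U21) :
    bottomNormSq (k * diagonal μ * k⁻¹)
      = Complex.normSq ((μ 0 - μ 2) * k 2 0) + Complex.normSq ((μ 1 - μ 2) * k 2 1)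
        + Complex.normSq ((μ 0 - μ 2) * k 2 0 * conj (k 2 0)
            + (μ 1 - μ 2) * k 2 1 * conj (k 2 1)) := by
  have e₀ := mul_diagonal_mul_inv_apply_two_of_mem_U21 μ hk (j := 0) (by decide)
  have e₁ := mul_diagonal_mul_inv_apply_two_of_mem_U21 μ hk (j := 1) (by decide)
  have c₀₀ := col_inner_of_mem_U21 hk 0 0
  have c₀₁ := col_inner_of_mem_U21 hk 0 1
  have c₁₀ := col_inner_of_mem_U21 hk 1 0
  have c₁₁ := col_inner_of_mem_U21 hk 1 1
  simp only [J3] at c₀₀ c₀₁ c₁₀ c₁₁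
  simp at c₀₀ c₀₁ c₁₀ c₁₁
  set d₀ := μ 0 - μ 2
  set d₁ := μ 1 - μ 2
  -- `c_lm` says `Σ_{i<2} conj (k i l) * k i m = [l = m] + conj (k 2 l) * k 2 m` for `l, m < 2`
  have key : (k * diagonal μ * k⁻¹) 2 0 * conj ((k * diagonal μ * k⁻¹) 2 0)
      + (k * diagonal μ * k⁻¹) 2 1 * conj ((k * diagonal μ * k⁻¹) 2 1)
      = d₀ * k 2 0 * conj (d₀ * k 2 0) + d₁ * k 2 1 * conj (d₁ * k 2 1)
        + (d₀ * k 2 0 * conj (k 2 0) + d₁ * k 2 1 * conj (k 2 1))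
          * conj (d₀ * k 2 0 * conj (k 2 0) + d₁ * k 2 1 * conj (k 2 1)) := by
    rw [e₀, e₁]
    simp only [map_add, map_mul, Complex.conj_conj]
    linear_combination (d₀ * k 2 0 * (conj d₀ * conj (k 2 0))) * c₀₀
      + (d₀ * k 2 0 * (conj d₁ * conj (k 2 1))) * c₀₁
      + (d₁ * k 2 1 * (conj d₀ * conj (k 2 0))) * c₁₀
      + (d₁ * k 2 1 * (conj d₁ * conj (k 2 1))) * c₁₁
  simp only [Complex.mul_conj] at key
  exact_mod_cast key

lemma bottomNormSq_mul_diagonal_mul_inv_le (hk : k ∈ U21) {δ : ℝ}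
    (h₀ : Complex.normSq (μ 0 - μ 2) ≤ δ) (h₁ : Complex.normSq (μ 1 - μ 2) ≤ δ) :
    bottomNormSq (k * diagonal μ * k⁻¹) ≤ δ * (1 + bottomNormSq k) * bottomNormSq k := by
  rw [bottomNormSq_mul_diagonal_mul_inv μ hk]
  have cauchySchwarz := normSq_add_mul_conj_le ((μ 0 - μ 2) * k 2 0) ((μ 1 - μ 2) * k 2 1)
    (k 2 0) (k 2 1)
  have hw : Complex.normSq ((μ 0 - μ 2) * k 2 0) + Complex.normSq ((μ 1 - μ 2) * k 2 1)
      ≤ δ * bottomNormSq k := by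
    rw [Complex.normSq_mul, Complex.normSq_mul, bottomNormSq]
    nlinarith [Complex.normSq_nonneg (k 2 0), Complex.normSq_nonneg (k 2 1)]
  rw [← bottomNormSq] at cauchySchwarz
  nlinarith [bottomNormSq_nonneg k]

lemma bottomNormSq_mul_diagonal_mul_inv_pos (hk : k ∈ U21) (h₀ : μ 0 ≠ μ 2) (h₁ : μ 1 ≠ μ 2)
    (ht : 0 < bottomNormSq k) : 0 < bottomNormSq (k * diagonal μ * k⁻¹) := by
  rw [bottomNormSq_mul_diagonal_mul_inv μ hk]
  have hk₂ : k 2 0 ≠ 0 ∨ k 2 1 ≠ 0 := by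
    by_contra! hzero
    simp [bottomNormSq, hzero] at ht
  have hw : 0 < Complex.normSq ((μ 0 - μ 2) * k 2 0) + Complex.normSq ((μ 1 - μ 2) * k 2 1) := by
    rcases hk₂ with hk₂ | hk₂
    · linarith [Complex.normSq_pos.2 (mul_ne_zero (sub_ne_zero.2 h₀) hk₂),
        Complex.normSq_nonneg ((μ 1 - μ 2) * k 2 1)]
    · linarith [Complex.normSq_pos.2 (mul_ne_zero (sub_ne_zero.2 h₁) hk₂),
        Complex.normSq_nonneg ((μ 0 - μ 2) * k 2 0)]
  linarith [Complex.normSq_nonneg ((μ 0 - μ 2) * k 2 0 * conj (k 2 0)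
    + (μ 1 - μ 2) * k 2 1 * conj (k 2 1))]

end Conjugation

lemma inv_mem_genGrpC {g h : Matrix (Fin 3) (Fin 3) ℂ} (hg : IsUnit g.det) (hh : IsUnit h.det)
    {x : Matrix (Fin 3) (Fin 3) ℂ} (hx : x ∈ genGrpC g h) : x⁻¹ ∈ genGrpC g h := by
  induction hx using Submonoid.closure_induction with
  | mem x hx =>
    apply Submonoid.subset_closure
    rcases hx with rfl | rfl | rfl | rfl
    · simp
    · simp
    · simp [nonsing_inv_nonsing_inv _ hg]
    · simp [nonsing_inv_nonsing_inv _ hh]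
  | one => simp [one_mem]
  | mul x y _ _ hx hy => simpa [Matrix.mul_inv_rev] using mul_mem hy hx

noncomputable def conjIter (g h : Matrix (Fin 3) (Fin 3) ℂ) : ℕ → Matrix (Fin 3) (Fin 3) ℂ
  | 0 => h
  | n + 1 => conjIter g h n * g * (conjIter g h n)⁻¹

lemma conjIter_mem_U21 {g h : Matrix (Fin 3) (Fin 3) ℂ} (hg : g ∈ U21) (hh : h ∈ U21) (n : ℕ) :
    conjIter g h n ∈ U21 := by
  induction n with
  | zero => exact hh
  | succ n ih => exact mul_mem_U21 (mul_mem_U21 ih hg) (inv_mem_U21 ih)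

lemma conjIter_mem_genGrpC {g h : Matrix (Fin 3) (Fin 3) ℂ} (hg : IsUnit g.det)
    (hh : IsUnit h.det) (n : ℕ) : conjIter g h n ∈ genGrpC g h := by
  induction n with
  | zero => exact Submonoid.subset_closure (by simp [conjIter])
  | succ n ih =>
    exact mul_mem (mul_mem ih (Submonoid.subset_closure (by simp))) (inv_mem_genGrpC hg hh ih)

theorem stmt13_general (μ₁ μ₂ μ₃ : ℂ)
    (h13 : μ₁ ≠ μ₃) (h23 : μ₂ ≠ μ₃)
    (g : Matrix (Fin 3) (Fin 3) ℂ) (hg : g = Matrix.diagonal ![μ₁, μ₂, μ₃])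
    (hgU : g ∈ U21)
    (h : Matrix (Fin 3) (Fin 3) ℂ) (hU : h ∈ U21)
    (δ : ℝ) (hδ : δ = max (‖μ₁ - μ₃‖ ^ 2) (‖μ₂ - μ₃‖ ^ 2))
    (hsmall : ‖h 2 2‖ ^ 2 * δ < 1) :
    (h 0 2 = 0 ∧ h 1 2 = 0 ∧ h 2 0 = 0 ∧ h 2 1 = 0 ∧ ‖h 2 2‖ = 1)
    ∨ ((∃ γ : ℕ → Matrix (Fin 3) (Fin 3) ℂ,
          (∀ m, γ m ∈ genGrpC g h) ∧
          Function.Injective γ ∧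
          ∃ γinf ∈ U21, Tendsto γ atTop (nhds γinf)) ∧
        ¬ DiscreteTopology (genGrpC g h)) := by
  subst hg
  rcases (bottomNormSq_nonneg h).eq_or_lt with ht | ht
  · exact .inl (apply_two_eq_zero_of_bottomNormSq_eq_zero hU ht.symm)
  right
  have hgdet := isUnit_det_of_mem_U21 hgU
  have hdet := isUnit_det_of_mem_U21 hU
  set γ := conjIter (diagonal ![μ₁, μ₂, μ₃]) h
  have hγU := conjIter_mem_U21 hgU hU
  have hpos (n : ℕ) : 0 < bottomNormSq (γ n) := by
    induction n with
    | zero => exact ht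
    | succ n ih => exact bottomNormSq_mul_diagonal_mul_inv_pos _ (hγU n) h13 h23 ih
  have hstep (n : ℕ) :
      bottomNormSq (γ (n + 1)) ≤ δ * (1 + bottomNormSq (γ n)) * bottomNormSq (γ n) :=
    bottomNormSq_mul_diagonal_mul_inv_le _ (hγU n)
      (by simp [hδ, ← Complex.sq_norm]) (by simp [hδ, ← Complex.sq_norm])
  have hsmall' : δ * (1 + bottomNormSq h) < 1 := by
    rw [Complex.sq_norm, normSq_two_two_of_mem_U21 hU] at hsmall
    linarith
  have hanti := strictAnti_of_le_mul_one_add hpos hsmall' hstep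
  obtain ⟨L, hLU, φ, hφ, hlim⟩ := exists_mem_U21_tendsto_subseq hγU fun n =>
    norm_apply_le_of_bottomNormSq_le (hγU n) hU (hanti.antitone (Nat.zero_le n))
  have hinj : Function.Injective (γ ∘ φ) := fun a b hab =>
    hφ.injective (hanti.injective (congrArg bottomNormSq hab))
  have hγG (m : ℕ) : (γ ∘ φ) m ∈ genGrpC _ h := conjIter_mem_genGrpC hgdet hdet (φ m)
  exact ⟨⟨γ ∘ φ, hγG, hinj, L, hLU, hlim⟩,
    not_discreteTopology_of_injective_tendsto (fun _ => inv_mem_genGrpC hgdet hdet) hγG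
      (fun m => isUnit_det_of_mem_U21 (hγU (φ m))) hinj (isUnit_det_of_mem_U21 hLU) hlim⟩

theorem stmt13 (μ₁ μ₂ μ₃ : ℂ) (h₁ : ‖μ₁‖ = 1) (h₂ : ‖μ₂‖ = 1) (h₃ : ‖μ₃‖ = 1)
    (h13 : μ₁ ≠ μ₃) (h23 : μ₂ ≠ μ₃)
    (g : Matrix (Fin 3) (Fin 3) ℂ) (hg : g = Matrix.diagonal ![μ₁, μ₂, μ₃])
    (hgU : g ∈ U21)
    (h : Matrix (Fin 3) (Fin 3) ℂ) (hU : h ∈ U21)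
    (δ : ℝ) (hδ : δ = max (‖μ₁ - μ₃‖ ^ 2) (‖μ₂ - μ₃‖ ^ 2))
    (hsmall : ‖h 2 2‖ ^ 2 * δ < 1) :
    (h 0 2 = 0 ∧ h 1 2 = 0 ∧ h 2 0 = 0 ∧ h 2 1 = 0 ∧ ‖h 2 2‖ = 1)
    ∨ ((∃ γ : ℕ → Matrix (Fin 3) (Fin 3) ℂ,
          (∀ m, γ m ∈ genGrpC g h) ∧
          Function.Injective γ ∧
          ∃ γinf ∈ U21, Tendsto γ atTop (nhds γinf)) ∧
        ¬ DiscreteTopology (genGrpC g h)) :=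
  stmt13_general μ₁ μ₂ μ₃ h13 h23 g hg hgU h hU δ hδ hsmall
end

section
/- Let a, b, c, d ∈ ℂ with ad − bc = 1, regarded as quaternions, and let T = (1/√2)·[[1, −j],[−j, 1]] with T⁻¹ = (1/√2)·[[1, j],[j, 1]]. Then ĥ = T·[[a, b],[c, d]]·T⁻¹ satisfies ĥ* J ĥ = J where J = diag(1, −1), i.e. ĥ ∈ Sp(1,1); moreover, for every θ ∈ ℝ, T·diag(e^{iθ}, e^{−iθ})·T⁻¹ = diag(e^{iθ}, e^{−iθ}). -/
/-!
`T` is unitary (`Tᴴ = T⁻¹`), so `ĥᴴ J ĥ = T (gᴴ K2 g) T⁻¹` with `K2 = T⁻¹ J T = [[0, -j], [j, 0]]`.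
For complex `z` one has `j z = z̄ j`, which turns `gᴴ K2 g` into `conj (det g) • K2` when `g` has
complex entries; hence `det g = 1` gives `ĥᴴ J ĥ = T K2 T⁻¹ = J`. The same commutation rule
`j e^{iθ} = e^{-iθ} j` makes `T` commute with `diag(e^{iθ}, e^{-iθ})`.
-/


open Quaternion Matrix

/-- The matrix `T = (1/√2)·[[1, −j],[−j, 1]]`. -/
noncomputable def Tm : Matrix (Fin 2) (Fin 2) ℍ[ℝ] :=
  (Real.sqrt 2)⁻¹ • !![1, -jq; -jq, 1]

/-- The matrix `T⁻¹ = (1/√2)·[[1, j],[j, 1]]`. -/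
noncomputable def Tmi : Matrix (Fin 2) (Fin 2) ℍ[ℝ] :=
  (Real.sqrt 2)⁻¹ • !![1, jq; jq, 1]

/-- The Hermitian form `J = diag(1, −1)` defining `Sp(1,1)`. -/
noncomputable def J2 : Matrix (Fin 2) (Fin 2) ℍ[ℝ] := !![1, 0; 0, -1]

open ComplexConjugate

@[simp] lemma cq_re (z : ℂ) : (cq z).re = z.re := rfl
@[simp] lemma cq_imI (z : ℂ) : (cq z).imI = z.im := rfl
@[simp] lemma cq_imJ (z : ℂ) : (cq z).imJ = 0 := rfl
@[simp] lemma cq_imK (z : ℂ) : (cq z).imK = 0 := rfl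
@[simp] lemma jq_re : jq.re = 0 := rfl
@[simp] lemma jq_imI : jq.imI = 0 := rfl
@[simp] lemma jq_imJ : jq.imJ = 1 := rfl
@[simp] lemma jq_imK : jq.imK = 0 := rfl

lemma cq_one : cq 1 = 1 := by
  ext <;> simp

lemma cq_mul (z w : ℂ) : cq (z * w) = cq z * cq w := by
  ext <;> simp

lemma star_cq (z : ℂ) : star (cq z) = cq (conj z) := by
  ext <;> simp

lemma star_jq : star jq = -jq := by
  ext <;> simp

lemma jq_mul_jq : jq * jq = -1 := by
  ext <;> simp

lemma jq_mul_cq (z : ℂ) : jq * cq z = cq (conj z) * jq := by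
  ext <;> simp

lemma star_cq_mul_jq_mul_cq (z w : ℂ) : star (cq z) * jq * cq w = cq (conj (z * w)) * jq := by
  rw [mul_assoc, jq_mul_cq, star_cq, ← mul_assoc, ← cq_mul, map_mul]

lemma expI_eq_cq (θ : ℝ) : expI θ = cq ⟨Real.cos θ, Real.sin θ⟩ := rfl

lemma jq_mul_expI (θ : ℝ) : jq * expI θ = expI (-θ) * jq := by
  rw [expI_eq_cq, jq_mul_cq, expI_eq_cq, Real.cos_neg, Real.sin_neg]
  rfl

lemma inv_sqrt_two_smul_mul_mul_inv_sqrt_two_smul {n : Type*} [Fintype n]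
    (A X B : Matrix n n ℍ[ℝ]) :
    ((√2)⁻¹ • A) * X * ((√2)⁻¹ • B) = (2 : ℝ)⁻¹ • (A * X * B) := by
  rw [smul_mul_assoc, mul_smul_comm, smul_mul_assoc, smul_smul, ← mul_inv,
    Real.mul_self_sqrt zero_le_two]

lemma Tm_mul_Tmi : Tm * Tmi = 1 := by
  rw [← mul_one Tm, Tm, Tmi, inv_sqrt_two_smul_mul_mul_inv_sqrt_two_smul]
  ext i k : 1
  fin_cases i <;> fin_cases k <;> simp [jq_mul_jq, ← add_smul] <;> norm_num

lemma Tmi_mul_Tm : Tmi * Tm = 1 := by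
  rw [← mul_one Tmi, Tm, Tmi, inv_sqrt_two_smul_mul_mul_inv_sqrt_two_smul]
  ext i k : 1
  fin_cases i <;> fin_cases k <;> simp [jq_mul_jq, ← add_smul] <;> norm_num

lemma conjTranspose_Tm : Tmᴴ = Tmi := by
  ext i k : 1
  fin_cases i <;> fin_cases k <;> simp [Tm, Tmi, Quaternion.star_smul, star_jq]

lemma conjTranspose_Tmi : Tmiᴴ = Tm := by
  rw [← conjTranspose_Tm, conjTranspose_conjTranspose]

noncomputable def K2 : Matrix (Fin 2) (Fin 2) ℍ[ℝ] := !![0, -jq; jq, 0]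

lemma Tmi_mul_J2_mul_Tm : Tmi * J2 * Tm = K2 := by
  rw [Tm, Tmi, inv_sqrt_two_smul_mul_mul_inv_sqrt_two_smul]
  ext i k : 1
  fin_cases i <;> fin_cases k <;> simp [J2, K2, jq_mul_jq] <;> module

lemma Tm_mul_K2_mul_Tmi : Tm * K2 * Tmi = J2 := by
  rw [← Tmi_mul_J2_mul_Tm, ← Matrix.mul_assoc, ← Matrix.mul_assoc, Tm_mul_Tmi, Matrix.one_mul,
    Matrix.mul_assoc, Tm_mul_Tmi, Matrix.mul_one]

lemma conjTranspose_conj_Tm_mul_J2_mul_conj_Tm (X : Matrix (Fin 2) (Fin 2) ℍ[ℝ]) :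
    (Tm * X * Tmi)ᴴ * J2 * (Tm * X * Tmi) = Tm * (Xᴴ * K2 * X) * Tmi := by
  rw [← Tmi_mul_J2_mul_Tm]
  simp only [conjTranspose_mul, conjTranspose_Tm, conjTranspose_Tmi, Matrix.mul_assoc]

lemma conjTranspose_mul_K2_mul_self (a b c d : ℂ) :
    !![cq a, cq b; cq c, cq d]ᴴ * K2 * !![cq a, cq b; cq c, cq d]
      = cq (conj (a * d - b * c)) • K2 := by
  ext i k : 1
  fin_cases i <;> fin_cases k <;> simp [K2, Matrix.mul_apply, star_cq_mul_jq_mul_cq] <;>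
    ext <;> simp <;> ring

lemma commute_Tm_of_jq_mul {p q : ℍ[ℝ]} (hp : jq * p = q * jq) (hq : jq * q = p * jq) :
    Commute Tm !![p, 0; 0, q] := by
  refine Commute.smul_left ?_ _
  ext i k : 1
  fin_cases i <;> fin_cases k <;> simp [hp, hq]

theorem stmt14 (a b c d : ℂ) (hdet : a * d - b * c = 1) :
    Tm * Tmi = 1 ∧ Tmi * Tm = 1
    ∧ (Tm * !![cq a, cq b; cq c, cq d] * Tmi)ᴴ * J2 * (Tm * !![cq a, cq b; cq c, cq d] * Tmi)
        = J2
    ∧ ∀ θ : ℝ, Tm * !![expI θ, 0; 0, expI (-θ)] * Tmi = !![expI θ, 0; 0, expI (-θ)] := by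
  refine ⟨Tm_mul_Tmi, Tmi_mul_Tm, ?_, fun θ => ?_⟩
  · rw [conjTranspose_conj_Tm_mul_J2_mul_conj_Tm, conjTranspose_mul_K2_mul_self, hdet, map_one,
      cq_one, one_smul, Tm_mul_K2_mul_Tmi]
  · have hcomm := commute_Tm_of_jq_mul (jq_mul_expI θ) (by simpa using jq_mul_expI (-θ))
    rw [hcomm.eq, Matrix.mul_assoc, Tm_mul_Tmi, Matrix.mul_one]
end
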